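/- arXiv:2506.12920 — 2 statements merged into one kernel-verified Lean document; each statement's English description precedes it below -/
import Mathlib

section
/- Let a = (a_1,...,a_κ) and ã = (ã_1,...,ã_κ) be two vectors in R^κ. Suppose a_i has the same rank within a as ã_j has within ã (where rank 1 means largest, rank κ means smallest, ties broken consistently). Then there exists an index m such that |a_i - ã_j| ≤ |a_m - ã_m|. -/
/-- Pigeonhole: if `r i = r' j`, some `m` has `r m ≤ r i` and `r' j ≤ r' m`. -/
lemma exists_cross_rank {κ : ℕ} (r r' : Equiv.Perm (Fin κ)) (i j : Fin κ)
    (hij : r i = r' j) : ∃ m : Fin κ, r m ≤ r i ∧ r' j ≤ r' m := by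
  by_contra h
  push_neg at h
  -- h : ∀ m, r m ≤ r i → r' m < r' j
  have hinj : Set.InjOn (fun q => r' (r.symm q)) (Finset.Iic (r i)) := by
    intro x _ y _ hxy
    simpa using hxy
  have hmaps : ∀ q ∈ Finset.Iic (r i), (fun q => r' (r.symm q)) q ∈ Finset.Iio (r' j) := by
    intro q hq
    simp only [Finset.mem_Iic] at hq
    have := h (r.symm q) (by simpa using hq)
    simpa using this
  have hcard := Finset.card_le_card_of_injOn _ hmaps hinj
  have h1 : (Finset.Iic (r i)).card = (r i : ℕ) + 1 := by simp
  have h2 : (Finset.Iio (r' j)).card = (r' j : ℕ) := by simp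
  rw [h1, h2, hij] at hcard
  omega

/-- If `a i` has the same rank within `a` as `a2 j` has within `a2`
(ranks given by permutations `r`, `r'` compatible with the decreasing order of values,
ties broken consistently), then some coordinatewise difference dominates `|a i - a2 j|`. -/
theorem matching_ranks_dominate {κ : ℕ} (a a2 : Fin κ → ℝ) (r r' : Equiv.Perm (Fin κ))
    (hr : ∀ p q : Fin κ, r p < r q → a q ≤ a p)
    (hr' : ∀ p q : Fin κ, r' p < r' q → a2 q ≤ a2 p)
    (i j : Fin κ) (hij : r i = r' j) :
    ∃ m : Fin κ, |a i - a2 j| ≤ |a m - a2 m| := by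
  have le_of_rank_le : ∀ (s : Equiv.Perm (Fin κ)) (b : Fin κ → ℝ),
      (∀ p q : Fin κ, s p < s q → b q ≤ b p) →
      ∀ p q : Fin κ, s p ≤ s q → b q ≤ b p := by
    intro s b hs p q hpq
    rcases lt_or_eq_of_le hpq with hlt | heq
    · exact hs p q hlt
    · rw [s.injective heq]
  rcases le_total (a2 j) (a i) with hle | hle
  · obtain ⟨m, hm1, hm2⟩ := exists_cross_rank r r' i j hij
    refine ⟨m, ?_⟩
    have h1 : a i ≤ a m := le_of_rank_le r a hr m i hm1
    have h2 : a2 m ≤ a2 j := le_of_rank_le r' a2 hr' j m hm2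
    rw [abs_of_nonneg (by linarith)]
    calc a i - a2 j ≤ a m - a2 m := by linarith
      _ ≤ |a m - a2 m| := le_abs_self _
  · obtain ⟨m, hm1, hm2⟩ := exists_cross_rank r' r j i hij.symm
    refine ⟨m, ?_⟩
    have h1 : a2 j ≤ a2 m := le_of_rank_le r' a2 hr' m j hm1
    have h2 : a m ≤ a i := le_of_rank_le r a hr i m hm2
    rw [abs_of_nonpos (by linarith)]
    calc -(a i - a2 j) = a2 j - a i := by ring
      _ ≤ a2 m - a m := by linarith
      _ ≤ |a m - a2 m| := by rw [abs_sub_comm]; exact le_abs_self _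
end

section
/- Consider n agents, each agent i with a fixed nonempty peer set, a finite set of quantile levels T ⊂ [0,1], real coefficients λ_τ for τ ∈ T with ∑_{τ∈T} |λ_τ| < 1, and constants c_i ∈ R. Define the best response map BR: R^n → R^n by BR_i(y) = c_i + ∑_{τ∈T} λ_τ q_{τ,i}(y_{-i}), where q_{τ,i} is the Type-7 sample τ-quantile of the peer outcomes of i. Then BR is a contraction on (R^n, ‖·‖_∞) with Lipschitz constant ∑_{τ∈T} |λ_τ|. -/
/-! Sorting commutes with adding a constant and is monotone for the pointwise order (the `k`-th
smallest value is `< c` exactly when more than `k` values are `< c`), so every order statistic is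
1-Lipschitz for the sup norm. A Type-7 quantile is a convex combination of two order statistics
with weight `Int.fract (τ (d - 1)) ∈ [0, 1)`, hence 1-Lipschitz as well, and each coordinate of the
best response, a constant plus a `λ`-weighted sum of quantiles, is `∑ |λ_τ|`-Lipschitz. -/

/-- The `k`-th smallest (0-indexed) outcome among the peers in `P` under outcome vector `y`. -/
noncomputable def orderStat {n : ℕ} (P : Finset (Fin n)) (y : Fin n → ℝ) (k : ℕ) : ℝ :=
  ((P.val.map y).sort (· ≤ ·)).getD k 0

/-- The Type-7 sample τ-quantile of the outcomes of the peers in `P`: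
`(1-ω) y_{(π)} + ω y_{(π+1)}` with `π = ⌊τ(d-1)⌋ + 1` (1-based; here 0-based `⌊τ(d-1)⌋`)
and `ω = τ(d-1) - ⌊τ(d-1)⌋`. -/
noncomputable def quantile7 {n : ℕ} (P : Finset (Fin n)) (y : Fin n → ℝ) (τ : ℝ) : ℝ :=
  let h : ℝ := τ * ((P.card : ℝ) - 1)
  (1 - (h - ⌊h⌋)) * orderStat P y ⌊h⌋.toNat + (h - ⌊h⌋) * orderStat P y (⌊h⌋.toNat + 1)

open Finset

theorem List.Pairwise.getElem_lt_iff_lt_countP {α : Type*} [LinearOrder α] {l : List α}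
    (hl : l.Pairwise (· ≤ ·)) {k : ℕ} (hk : k < l.length) (c : α) :
    l[k] < c ↔ k < l.countP (· < c) := by
  induction l generalizing k with
  | nil => simp at hk
  | cons a l ih =>
    obtain ⟨ha, hl⟩ := List.pairwise_cons.1 hl
    by_cases hac : a < c
    · cases k with
      | zero => simp [hac]
      | succ k => simp [hac, ih hl (by simpa using hk)]
    · have hge : ∀ b ∈ a :: l, ¬ b < c := by
        simp only [List.mem_cons, forall_eq_or_imp]
        exact ⟨hac, fun b hb => not_lt.2 ((not_lt.1 hac).trans (ha b hb))⟩
      rw [List.countP_eq_zero.2 (by simpa using hge)]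
      simpa using hge _ (List.getElem_mem hk)

section OrderStatistics

variable {n : ℕ} (P : Finset (Fin n))

theorem orderStat_of_card_le (y : Fin n → ℝ) {k : ℕ} (hk : P.card ≤ k) :
    orderStat P y k = 0 := by
  rw [orderStat, List.getD_eq_default]
  simpa using hk

theorem orderStat_lt_iff {y : Fin n → ℝ} {k : ℕ} (hk : k < P.card) (c : ℝ) :
    orderStat P y k < c ↔ k < #{i ∈ P | y i < c} := by
  have hlen : k < ((P.val.map y).sort (· ≤ ·)).length := by simpa using hk
  rw [orderStat, List.getD_eq_getElem _ _ hlen,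
    (Multiset.pairwise_sort _ _).getElem_lt_iff_lt_countP hlen, ← Multiset.coe_countP,
    Multiset.sort_eq, Multiset.countP_map, card_def, filter_val]

theorem orderStat_mono {y z : Fin n → ℝ} (h : y ≤ z) (k : ℕ) :
    orderStat P y k ≤ orderStat P z k := by
  rcases lt_or_ge k P.card with hk | hk
  · by_contra! hlt
    have hsub : {i ∈ P | z i < orderStat P y k} ⊆ {i ∈ P | y i < orderStat P y k} :=
      monotone_filter_right _ fun i _ hzi => (h i).trans_lt hzi
    exact (lt_irrefl _) ((orderStat_lt_iff P hk _).2 <|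
      ((orderStat_lt_iff P hk _).1 hlt).trans_le (card_le_card hsub))
  · simp [orderStat_of_card_le P _ hk]

theorem orderStat_add_const (y : Fin n → ℝ) (ε : ℝ) {k : ℕ} (hk : k < P.card) :
    orderStat P (fun i => y i + ε) k = orderStat P y k + ε := by
  have hmap : ((P.val.map y).sort (· ≤ ·)).map (· + ε)
      = (P.val.map fun i => y i + ε).sort (· ≤ ·) := by
    rw [Multiset.map_sort (r := (· ≤ ·)) (r' := (· ≤ ·)) (f := (· + ε)) _
      (fun a _ b _ => (add_le_add_iff_right ε).symm), Multiset.map_map]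
    rfl
  have hlen : k < ((P.val.map y).sort (· ≤ ·)).length := by simpa using hk
  have hlen' : k < ((P.val.map fun i => y i + ε).sort (· ≤ ·)).length := by simpa using hk
  rw [orderStat, orderStat, List.getD_eq_getElem _ _ hlen', List.getD_eq_getElem _ _ hlen,
    List.getElem_of_eq hmap.symm hlen', List.getElem_map]

theorem lipschitzWith_orderStat (k : ℕ) :
    LipschitzWith 1 fun y : Fin n → ℝ => orderStat P y k := by
  refine LipschitzWith.of_le_add fun y z => ?_
  rcases lt_or_ge k P.card with hk | hk
  · rw [← orderStat_add_const P z _ hk]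
    exact orderStat_mono P
      (fun i => sub_le_iff_le_add'.1 ((Real.sub_le_dist _ _).trans (dist_le_pi_dist y z i))) k
  · simp [orderStat_of_card_le P _ hk]

theorem quantile7_eq (y : Fin n → ℝ) (τ : ℝ) :
    quantile7 P y τ = (1 - Int.fract (τ * ((P.card : ℝ) - 1))) *
        orderStat P y ⌊τ * ((P.card : ℝ) - 1)⌋.toNat +
      Int.fract (τ * ((P.card : ℝ) - 1)) * orderStat P y (⌊τ * ((P.card : ℝ) - 1)⌋.toNat + 1) :=
  rfl

theorem lipschitzWith_quantile7 (τ : ℝ) :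
    LipschitzWith 1 fun y : Fin n → ℝ => quantile7 P y τ := by
  refine LipschitzWith.of_le_add fun y z => ?_
  set h : ℝ := τ * ((P.card : ℝ) - 1)
  have hω : 0 ≤ Int.fract h := Int.fract_nonneg h
  have hω' : 0 ≤ 1 - Int.fract h := by linarith [Int.fract_lt_one h]
  have hle (k : ℕ) : orderStat P y k ≤ orderStat P z k + dist y z :=
    sub_le_iff_le_add'.1 ((Real.sub_le_dist _ _).trans
      (by simpa using (lipschitzWith_orderStat P k).dist_le_mul y z))
  rw [quantile7_eq, quantile7_eq]
  calc _ ≤ (1 - Int.fract h) * (orderStat P z ⌊h⌋.toNat + dist y z)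
        + Int.fract h * (orderStat P z (⌊h⌋.toNat + 1) + dist y z) := by
        gcongr <;> apply hle
    _ = _ := by ring

end OrderStatistics

theorem lipschitzWith_sum_mul {α ι : Type*} [PseudoMetricSpace α] (s : Finset ι) (a : ι → ℝ)
    {f : ι → α → ℝ} (hf : ∀ i ∈ s, LipschitzWith 1 (f i)) :
    LipschitzWith (∑ i ∈ s, ‖a i‖₊) fun x => ∑ i ∈ s, a i * f i x := by
  refine LipschitzWith.of_dist_le_mul fun x y => ?_
  calc dist (∑ i ∈ s, a i * f i x) (∑ i ∈ s, a i * f i y)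
      ≤ ∑ i ∈ s, dist (a i * f i x) (a i * f i y) := dist_sum_sum_le _ _ _
    _ ≤ ∑ i ∈ s, ‖a i‖ * dist x y := by
        gcongr with i hi
        rw [← smul_eq_mul, ← smul_eq_mul, dist_smul₀]
        gcongr
        simpa using (hf i hi).dist_le_mul x y
    _ = _ := by simp [sum_mul]

theorem bestResponse_contraction_general {n : ℕ} (peers : Fin n → Finset (Fin n))
    (T : Finset ℝ)
    (lam : ℝ → ℝ)
    (c : Fin n → ℝ) (BR : (Fin n → ℝ) → Fin n → ℝ)
    (hBR : ∀ y i, BR y i = c i + ∑ τ ∈ T, lam τ * quantile7 (peers i) y τ) :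
    ∀ y yt : Fin n → ℝ, dist (BR y) (BR yt) ≤ (∑ τ ∈ T, |lam τ|) * dist y yt := by
  intro y yt
  refine (dist_pi_le_iff (by positivity)).2 fun i => ?_
  rw [hBR, hBR, dist_add_left]
  simpa using (lipschitzWith_sum_mul T lam fun τ _ =>
    lipschitzWith_quantile7 (peers i) τ).dist_le_mul y yt

/-- the best-response map of the quantile peer-effects game is a contraction
on `(ℝ^n, ‖·‖_∞)` with Lipschitz constant `∑_{τ∈T} |λ_τ|` (here `dist` is the sup distance). -/
theorem bestResponse_contraction {n : ℕ} (peers : Fin n → Finset (Fin n))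
    (hpeers : ∀ i, (peers i).Nonempty)
    (T : Finset ℝ) (hT : ∀ τ ∈ T, τ ∈ Set.Icc (0 : ℝ) 1)
    (lam : ℝ → ℝ) (hlam : ∑ τ ∈ T, |lam τ| < 1)
    (c : Fin n → ℝ) (BR : (Fin n → ℝ) → Fin n → ℝ)
    (hBR : ∀ y i, BR y i = c i + ∑ τ ∈ T, lam τ * quantile7 (peers i) y τ) :
    ∀ y yt : Fin n → ℝ, dist (BR y) (BR yt) ≤ (∑ τ ∈ T, |lam τ|) * dist y yt :=
  bestResponse_contraction_general peers T lam c BR hBR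
end
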